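/- Let (S,R) be an argumentation network, V₀ : S → [0,1] an initial assignment, and (V_i) the Gabbay-Rodrigues iteration sequence from V₀. Suppose that for some iteration i, every node X ∈ S with V_i(X) ∈ {0,1} satisfies V_{i+1}(X) = V_i(X). Then for every such X and every j ≥ 1, V_{i+j}(X) = V_i(X). -/
import Mathlib


open Filter Topology

variable {S : Type*}

/-- Maximum of `V` over the attackers of `X` (i.e. `{Y | R Y X}`),
with the convention that the maximum over the empty set is `0`. -/
noncomputable def attMax [Fintype S] (R : S → S → Prop) [DecidableRel R] (V : S → ℝ) (X : S) : ℝ :=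
  (Finset.univ.filter (fun Y => R Y X)).fold max 0 V

/-- One step of the Gabbay-Rodrigues iteration. -/
noncomputable def grStep [Fintype S] (R : S → S → Prop) [DecidableRel R] (V : S → ℝ) (X : S) : ℝ :=
  (1 - V X) * min (1/2) (1 - attMax R V X) + V X * max (1/2) (1 - attMax R V X)

/-- The Gabbay-Rodrigues iteration sequence from the initial assignment `V0`. -/
noncomputable def grSeq [Fintype S] (R : S → S → Prop) [DecidableRel R] (V0 : S → ℝ) : ℕ → S → ℝ
  | 0 => V0
  | i + 1 => grStep R (grSeq R V0 i)

def inSet (V : S → ℝ) : Set S := {X | V X = 1}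

def outSet (V : S → ℝ) : Set S := {X | V X = 0}

def conflictFree (R : S → S → Prop) (E : Set S) : Prop := ∀ X ∈ E, ∀ Y ∈ E, ¬ R X Y

def acceptable (R : S → S → Prop) (E : Set S) (X : S) : Prop := ∀ Y, R Y X → ∃ Z ∈ E, R Z Y

def admissible (R : S → S → Prop) (E : Set S) : Prop :=
  conflictFree R E ∧ ∀ X ∈ E, acceptable R E X

def completeExt (R : S → S → Prop) (E : Set S) : Prop :=
  admissible R E ∧ ∀ X, acceptable R E X → X ∈ E

/-- `E⁺` : the set of arguments attacked by `E`. -/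
def plusSet (R : S → S → Prop) (E : Set S) : Set S := {X | ∃ Y ∈ E, R Y X}

/-- The GR sequence is stable at iteration `k` if every node with a crisp value at
iteration `k` keeps that value at iteration `k+1`. -/
def grStable [Fintype S] (R : S → S → Prop) [DecidableRel R] (V0 : S → ℝ) (k : ℕ) : Prop :=
  ∀ X : S, (grSeq R V0 k X = 0 ∨ grSeq R V0 k X = 1) → grSeq R V0 (k + 1) X = grSeq R V0 k X


section Aux
variable [Fintype S] (R : S → S → Prop) [DecidableRel R]

lemma attMax_nonneg (V : S → ℝ) (X : S) : 0 ≤ attMax R V X :=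
  (Finset.le_fold_max _).mpr (Or.inl le_rfl)

lemma attMax_le' (V : S → ℝ) (X : S) {c : ℝ} (h0 : 0 ≤ c)
    (h : ∀ Y, R Y X → V Y ≤ c) : attMax R V X ≤ c :=
  (Finset.fold_max_le _).mpr ⟨h0, fun x hx => h x (by simpa using hx)⟩

lemma le_attMax' (V : S → ℝ) {X Y : S} (hR : R Y X) : V Y ≤ attMax R V X :=
  (Finset.le_fold_max _).mpr (Or.inr ⟨Y, by simpa using hR, le_rfl⟩)

lemma attMax_lt (V : S → ℝ) (X : S) {c : ℝ} (h0 : 0 < c)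
    (h : ∀ Y, R Y X → V Y < c) : attMax R V X < c :=
  (Finset.fold_max_lt _).mpr ⟨h0, fun x hx => h x (by simpa using hx)⟩

lemma grStep_mem (V : S → ℝ) (hV : ∀ Y, V Y ∈ Set.Icc (0:ℝ) 1) (X : S) :
    grStep R V X ∈ Set.Icc (0:ℝ) 1 := by
  have hM0 : 0 ≤ attMax R V X := attMax_nonneg R V X
  have hM1 : attMax R V X ≤ 1 := attMax_le' R V X zero_le_one (fun Y _ => (hV Y).2)
  have hx := hV X
  obtain ⟨h1, h2⟩ := hx
  unfold grStep
  constructor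
  · have ha : (0:ℝ) ≤ min (1/2) (1 - attMax R V X) := le_min (by norm_num) (by linarith)
    have hb : (0:ℝ) ≤ max (1/2) (1 - attMax R V X) := le_trans (by norm_num) (le_max_left _ _)
    nlinarith
  · have ha : min (1/2) (1 - attMax R V X) ≤ 1 := le_trans (min_le_left _ _) (by norm_num)
    have hb : max (1/2) (1 - attMax R V X) ≤ 1 := max_le (by norm_num) (by linarith)
    nlinarith

lemma grSeq_mem (V0 : S → ℝ) (hV0 : ∀ X, V0 X ∈ Set.Icc (0:ℝ) 1) :
    ∀ n X, grSeq R V0 n X ∈ Set.Icc (0:ℝ) 1 := by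
  intro n
  induction n with
  | zero => exact hV0
  | succ n ih => exact fun X => grStep_mem R _ ih X

end Aux

theorem stmt9 [Fintype S] [Nonempty S] (R : S → S → Prop) [DecidableRel R]
    (V0 : S → ℝ) (hV0 : ∀ X, V0 X ∈ Set.Icc (0:ℝ) 1)
    (i : ℕ)
    (hstab : ∀ X : S, (grSeq R V0 i X = 0 ∨ grSeq R V0 i X = 1) →
      grSeq R V0 (i + 1) X = grSeq R V0 i X) :
    ∀ X : S, (grSeq R V0 i X = 0 ∨ grSeq R V0 i X = 1) →
      ∀ j : ℕ, 1 ≤ j → grSeq R V0 (i + j) X = grSeq R V0 i X := by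

  set V := grSeq R V0 with hV
  have hmem : ∀ n X, V n X ∈ Set.Icc (0:ℝ) 1 := grSeq_mem R V0 hV0
  have key : ∀ j : ℕ, ∀ X : S, (V i X = 0 ∨ V i X = 1) → V (i + j) X = V i X := by
    intro j
    induction j with
    | zero => intro X _; rfl
    | succ j ih =>
      intro X hX
      have hstep : V (i + (j+1)) X = grStep R (V (i+j)) X := rfl
      cases hX with
      | inl h0 =>
        -- value 0: some attacker has value 1
        have h1 : V (i+1) X = 0 := by rw [hstab X (Or.inl h0), h0]
        have hstep1 : V (i+1) X = grStep R (V i) X := rfl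
        have hmin : min (1/2 : ℝ) (1 - attMax R (V i) X) = 0 := by
          rw [hstep1] at h1
          unfold grStep at h1
          rw [h0] at h1
          linarith [h1]
        have hM : attMax R (V i) X = 1 := by
          rcases le_or_gt (1/2 : ℝ) (1 - attMax R (V i) X) with h | h
          · rw [min_eq_left h] at hmin; norm_num at hmin
          · rw [min_eq_right h.le] at hmin; linarith
        obtain ⟨Y, hRY, hY1⟩ : ∃ Y, R Y X ∧ V i Y = 1 := by
          by_contra hc
          push_neg at hc
          have : attMax R (V i) X < 1 := by
            apply attMax_lt R _ _ one_pos
            intro Y hRY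
            exact lt_of_le_of_ne (hmem i Y).2 (hc Y hRY)
          linarith
        have hYj : V (i+j) Y = 1 := (ih Y (Or.inr hY1)).trans hY1
        have hMj : attMax R (V (i+j)) X = 1 := by
          have h1 : V (i+j) Y ≤ attMax R (V (i+j)) X := le_attMax' R _ hRY
          have h2 : attMax R (V (i+j)) X ≤ 1 :=
            attMax_le' R _ _ zero_le_one (fun Z _ => (hmem (i+j) Z).2)
          rw [hYj] at h1; linarith
        have hXj : V (i+j) X = 0 := (ih X (Or.inl h0)).trans h0
        rw [hstep, h0]
        unfold grStep
        rw [hXj, hMj]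
        norm_num
      | inr h1 =>
        -- value 1: all attackers have value 0
        have h1' : V (i+1) X = 1 := by rw [hstab X (Or.inr h1), h1]
        have hstep1 : V (i+1) X = grStep R (V i) X := rfl
        have hmax : max (1/2 : ℝ) (1 - attMax R (V i) X) = 1 := by
          rw [hstep1] at h1'
          unfold grStep at h1'
          rw [h1] at h1'
          linarith [h1']
        have hM : attMax R (V i) X = 0 := by
          rcases le_or_gt (1 - attMax R (V i) X) (1/2 : ℝ) with h | h
          · rw [max_eq_left h] at hmax; norm_num at hmax
          · rw [max_eq_right h.le] at hmax; linarith
        have hatt0 : ∀ Y, R Y X → V i Y = 0 := by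
          intro Y hRY
          have hle : V i Y ≤ attMax R (V i) X := le_attMax' R _ hRY
          have := (hmem i Y).1
          rw [hM] at hle; linarith
        have hMj : attMax R (V (i+j)) X = 0 := by
          apply le_antisymm
          · apply attMax_le' R _ _ le_rfl
            intro Y hRY
            rw [ih Y (Or.inl (hatt0 Y hRY))]
            exact (hatt0 Y hRY).le
          · exact attMax_nonneg R _ _
        have hXj : V (i+j) X = 1 := (ih X (Or.inr h1)).trans h1
        rw [hstep, h1]
        unfold grStep
        rw [hXj, hMj]
        norm_num
  intro X hX j _
  exact key j X hX
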